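/- arXiv:2001.03023 — 4 statements merged into one kernel-verified Lean document; each statement's English description precedes it below -/
import Mathlib

section
/- For real numbers a, b with b > a + 1 (and a, b such that the Gamma values are defined, e.g. a, b > 0), the infinite series ∑_{i=0}^∞ Γ(i+a)/Γ(i+b) converges and equals (1/(b-a-1)) · Γ(a)/Γ(b-1). -/
/-!
With `c = b - a - 1` and `f i = Γ(i + a) / Γ(i + b - 1)`, the recurrence `Γ(x + 1) = x Γ(x)`
gives `f i - f (i + 1) = c · Γ(i + a) / Γ(i + b)`, so the series telescopes to `f 0 / c`.
It remains to see `f i → 0`, which follows from log-convexity of `Γ`: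
`Γ(x + c) / Γ(x) ≥ (x - 1) ^ c`.
-/

open Real Filter Topology

theorem Real.Gamma_div_Gamma_sub_Gamma_add_one_div_Gamma_add_one {x y : ℝ} (hx : x ≠ 0)
    (hy : ∀ m : ℕ, y ≠ -m) :
    Gamma x / Gamma y - Gamma (x + 1) / Gamma (y + 1) = (y - x) * (Gamma x / Gamma (y + 1)) := by
  have hy0 : y ≠ 0 := by simpa using hy 0
  have hGy := Gamma_ne_zero hy
  rw [Gamma_add_one hx, Gamma_add_one hy0]
  field_simp

-- The slope of the convex function `log ∘ Gamma` on `[x, x + c]` is at least its slope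
-- `log (x - 1)` on `[x - 1, x]`.
theorem Real.rpow_le_Gamma_add_div_Gamma {x c : ℝ} (hx : 1 < x) (hc : 0 < c) :
    (x - 1) ^ c ≤ Gamma (x + c) / Gamma x := by
  have hx1 : 0 < x - 1 := sub_pos.2 hx
  have hGx1 := Gamma_pos_of_pos hx1
  have hGx := Gamma_pos_of_pos (hx1.trans (sub_one_lt x))
  have hGxc := Gamma_pos_of_pos (by linarith : 0 < x + c)
  have hslope := convexOn_log_Gamma.slope_mono_adjacent (Set.mem_Ioi.2 hx1)
    (Set.mem_Ioi.2 (by linarith : 0 < x + c)) (sub_one_lt x) (lt_add_of_pos_right x hc)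
  have hlog : log (Gamma x) = log (x - 1) + log (Gamma (x - 1)) := by
    rw [← log_mul hx1.ne' hGx1.ne', ← Gamma_add_one hx1.ne', sub_add_cancel]
  simp only [Function.comp_apply, sub_sub_cancel, div_one, add_sub_cancel_left] at hslope
  rw [hlog, add_sub_cancel_right, le_div_iff₀ hc] at hslope
  rw [← log_le_log_iff (by positivity) (div_pos hGxc hGx), log_rpow hx1, log_div hGxc.ne' hGx.ne',
    hlog]
  linarith

theorem Real.tendsto_Gamma_div_Gamma_add_atTop {c : ℝ} (hc : 0 < c) :
    Tendsto (fun x => Gamma x / Gamma (x + c)) atTop (𝓝 0) := by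
  have hbound : Tendsto (fun x : ℝ => ((x - 1) ^ c)⁻¹) atTop (𝓝 0) :=
    ((tendsto_rpow_atTop hc).comp
      (tendsto_atTop_add_const_right _ (-1) tendsto_id)).inv_tendsto_atTop
  refine squeeze_zero' ?_ ?_ hbound
  · filter_upwards [eventually_gt_atTop 0] with x hx
    exact div_nonneg (Gamma_pos_of_pos hx).le (Gamma_pos_of_pos (by linarith)).le
  · filter_upwards [eventually_gt_atTop 1] with x hx
    rw [← inv_div]
    exact inv_anti₀ (by have := sub_pos.2 hx; positivity) (rpow_le_Gamma_add_div_Gamma hx hc)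

theorem hasSum_sub_succ_of_antitone {f : ℕ → ℝ} {l : ℝ} (hf : Antitone f)
    (hl : Tendsto f atTop (𝓝 l)) : HasSum (fun n => f n - f (n + 1)) (f 0 - l) := by
  rw [hasSum_iff_tendsto_nat_of_nonneg fun n => sub_nonneg.2 (hf n.le_succ)]
  simpa only [Finset.sum_range_sub'] using tendsto_const_nhds.sub hl

theorem gamma_ratio_tsum_general (a b : ℝ) (ha : 0 < a) (hab : b > a + 1) :
    HasSum (fun i : ℕ => Real.Gamma (i + a) / Real.Gamma (i + b))
      ((1 / (b - a - 1)) * (Real.Gamma a / Real.Gamma (b - 1))) := by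
  have hc : 0 < b - a - 1 := by linarith
  set f : ℕ → ℝ := fun i => Gamma (i + a) / Gamma (i + b - 1) with hf
  have hstep (i : ℕ) : f i - f (i + 1) = (b - a - 1) * (Gamma (i + a) / Gamma (i + b)) := by
    have hi : (0 : ℝ) ≤ i := i.cast_nonneg
    have h := Gamma_div_Gamma_sub_Gamma_add_one_div_Gamma_add_one (x := i + a) (y := i + b - 1)
      (by positivity) fun m => by linarith [(m.cast_nonneg : (0 : ℝ) ≤ m)]
    rw [sub_add_cancel, show (i : ℝ) + b - 1 - (i + a) = b - a - 1 by ring] at h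
    simpa only [hf, Nat.cast_succ, add_right_comm _ (1 : ℝ), add_sub_cancel_right] using h
  have hanti : Antitone f := antitone_nat_of_succ_le fun i => sub_nonneg.1 <| by
    have hi : (0 : ℝ) ≤ i := i.cast_nonneg
    rw [hstep]
    exact mul_nonneg hc.le (div_nonneg (Gamma_pos_of_pos (by positivity)).le
      (Gamma_pos_of_pos (by linarith)).le)
  have hlim : Tendsto f atTop (𝓝 0) := by
    refine ((tendsto_Gamma_div_Gamma_add_atTop hc).comp
      (tendsto_atTop_add_const_right _ a tendsto_natCast_atTop_atTop)).congr fun i => ?_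
    simp only [hf, Function.comp_apply]
    ring_nf
  have hsum := (hasSum_sub_succ_of_antitone hanti hlim).div_const (b - a - 1)
  simp_rw [hstep, mul_div_cancel_left₀ _ hc.ne'] at hsum
  rwa [show f 0 - 0 = Gamma a / Gamma (b - 1) by simp [f], div_eq_inv_mul, ← one_div] at hsum

theorem gamma_ratio_tsum (a b : ℝ) (ha : 0 < a) (hb : 0 < b) (hab : b > a + 1) :
    HasSum (fun i : ℕ => Real.Gamma (i + a) / Real.Gamma (i + b))
      ((1 / (b - a - 1)) * (Real.Gamma a / Real.Gamma (b - 1))) :=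
  gamma_ratio_tsum_general a b ha hab
end

section
/- With x_{0,l} = (r/α₂)·(Γ(1+(β+1)/α₂)/Γ(1+β₂/α₂))·Γ(l+β₂/α₂)/Γ(l+(α₂+β+1)/α₂) for l ≥ 1 and x_{0,0} = 0, where β = β₁ + β₂ and all parameters positive, the marginal sum satisfies ∑_{l=0}^∞ x_{0,l} = r/(β₁+1). -/
open Real Filter Topology

/-! With `a = 1 + β₂/α₂` and `E = (β₁+1)/α₂` the terms are multiples of
`Γ(n+a)/Γ(n+a+1+E)`, which by `Γ(y+1) = yΓ(y)` is the telescoping difference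
`(u n - u (n+1))/E` of `u n = Γ(n+a)/Γ(n+a+E)`. Log-convexity of `Γ` gives
`u n ≤ (n+a-1)^(-E) → 0`, so the series sums to `u 0 / E = Γ(a)/(E Γ(a+E))`, and the
prefactor of the terms cancels this down to `r/(β₁+1)`. -/

theorem hasSum_sub_succ_of_tendsto {u : ℕ → ℝ} {l : ℝ} (hu : ∀ n, u (n + 1) ≤ u n)
    (hlim : Tendsto u atTop (𝓝 l)) : HasSum (fun n => u n - u (n + 1)) (u 0 - l) := by
  rw [hasSum_iff_tendsto_nat_of_nonneg fun n => sub_nonneg.mpr (hu n)]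
  simpa only [Finset.sum_range_sub'] using tendsto_const_nhds.sub hlim

namespace Real

theorem Gamma_div_Gamma_add_le_rpow {y E : ℝ} (hy : 1 < y) (hE : 0 < E) :
    Gamma y / Gamma (y + E) ≤ (y - 1) ^ (-E) := by
  have hy₀ : 0 < y - 1 := by linarith
  have hΓ : 0 < Gamma y := Gamma_pos_of_pos (by linarith)
  have hΓE : 0 < Gamma (y + E) := Gamma_pos_of_pos (by linarith)
  have hΓ₀ : 0 < Gamma (y - 1) := Gamma_pos_of_pos hy₀
  -- `y` is the convex combination of `y - 1` and `y + E` with weights `E/(1+E)` and `1/(1+E)`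
  have hconv := convexOn_log_Gamma.2 (show y - 1 ∈ Set.Ioi 0 from hy₀)
    (show y + E ∈ Set.Ioi 0 by simp only [Set.mem_Ioi]; linarith)
    (show 0 ≤ E / (1 + E) by positivity) (show 0 ≤ 1 / (1 + E) by positivity) (by field_simp; ring)
  have hmid : E / (1 + E) * (y - 1) + 1 / (1 + E) * (y + E) = y := by field_simp; ring
  have hrec : Gamma y = (y - 1) * Gamma (y - 1) := by
    simpa using Gamma_add_one hy₀.ne'
  simp only [Function.comp_apply, smul_eq_mul, hmid] at hconv
  have hlog : log (Gamma y) - log (Gamma (y + E)) ≤ -E * log (y - 1) := by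
    rw [hrec, log_mul hy₀.ne' hΓ₀.ne'] at hconv ⊢
    field_simp at hconv
    linarith
  calc Gamma y / Gamma (y + E) = exp (log (Gamma y) - log (Gamma (y + E))) := by
        rw [exp_sub, exp_log hΓ, exp_log hΓE]
    _ ≤ exp (-E * log (y - 1)) := exp_le_exp.mpr hlog
    _ = (y - 1) ^ (-E) := by rw [rpow_def_of_pos hy₀, mul_comm]

theorem tendsto_Gamma_div_Gamma_add_atTop_s5 (a : ℝ) {E : ℝ} (hE : 0 < E) :
    Tendsto (fun n : ℕ => Gamma (n + a) / Gamma (n + a + E)) atTop (𝓝 0) := by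
  have hshift : Tendsto (fun n : ℕ => (n : ℝ) + a) atTop atTop :=
    tendsto_atTop_add_const_right _ _ tendsto_natCast_atTop_atTop
  have hbound : Tendsto (fun n : ℕ => ((n : ℝ) + a - 1) ^ (-E)) atTop (𝓝 0) :=
    (tendsto_rpow_neg_atTop hE).comp (tendsto_atTop_add_const_right _ _ hshift)
  have hlarge : ∀ᶠ n : ℕ in atTop, 1 < (n : ℝ) + a := hshift.eventually_gt_atTop 1
  refine tendsto_of_tendsto_of_tendsto_of_le_of_le' tendsto_const_nhds hbound ?_ ?_
  · filter_upwards [hlarge] with n hn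
    exact div_nonneg (Gamma_pos_of_pos (by linarith)).le (Gamma_pos_of_pos (by linarith)).le
  · filter_upwards [hlarge] with n hn
    exact Gamma_div_Gamma_add_le_rpow hn hE

theorem Gamma_div_Gamma_add_sub_Gamma_div_Gamma_add {y E : ℝ} (hy : 0 < y) (hyE : 0 < y + E) :
    Gamma y / Gamma (y + E) - Gamma (y + 1) / Gamma (y + 1 + E)
      = E * (Gamma y / Gamma (y + 1 + E)) := by
  have hΓE := (Gamma_pos_of_pos hyE).ne'
  rw [Gamma_add_one hy.ne', show y + 1 + E = y + E + 1 by ring, Gamma_add_one hyE.ne']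
  field_simp
  ring

theorem hasSum_Gamma_div_Gamma_add_add_one {a E : ℝ} (ha : 0 < a) (hE : 0 < E) :
    HasSum (fun n : ℕ => Gamma (n + a) / Gamma (n + a + 1 + E)) (Gamma a / Gamma (a + E) / E) := by
  set u : ℕ → ℝ := fun n => Gamma (n + a) / Gamma (n + a + E)
  have hdiff : ∀ n : ℕ, u n - u (n + 1) = E * (Gamma (n + a) / Gamma (n + a + 1 + E)) := by
    intro n
    simp only [u, Nat.cast_succ, add_right_comm _ (1 : ℝ) a]
    exact Gamma_div_Gamma_add_sub_Gamma_div_Gamma_add (by positivity) (by positivity)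
  have hmono : ∀ n : ℕ, u (n + 1) ≤ u n := fun n => by
    rw [← sub_nonneg, hdiff]
    exact mul_nonneg hE.le (div_nonneg (Gamma_pos_of_pos (by positivity)).le
      (Gamma_pos_of_pos (by positivity)).le)
  have htel : HasSum (fun n => u n - u (n + 1)) (u 0 - 0) :=
    hasSum_sub_succ_of_tendsto hmono (tendsto_Gamma_div_Gamma_add_atTop_s5 a hE)
  simp only [hdiff] at htel
  simpa [u, mul_div_cancel_left₀ _ hE.ne'] using htel.div_const E

end Real

theorem marginal_x0_general (α₂ β₁ β₂ r : ℝ) (hα₂ : 0 < α₂) (hβ₁ : 0 < β₁) (hβ₂ : 0 < β₂)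
    (x : ℕ → ℝ) (hx0 : x 0 = 0)
    (hx : ∀ l : ℕ, 1 ≤ l →
      x l = (r / α₂) *
        (Real.Gamma (1 + (β₁ + β₂ + 1) / α₂) / Real.Gamma (1 + β₂ / α₂)) *
        (Real.Gamma ((l : ℝ) + β₂ / α₂) /
          Real.Gamma ((l : ℝ) + (α₂ + (β₁ + β₂) + 1) / α₂))) :
    HasSum x (r / (β₁ + 1)) := by
  obtain ⟨a, ha_def⟩ : ∃ a, a = 1 + β₂ / α₂ := ⟨_, rfl⟩
  obtain ⟨E, hE_def⟩ : ∃ E, E = (β₁ + 1) / α₂ := ⟨_, rfl⟩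
  have ha : 0 < a := by rw [ha_def]; positivity
  have hE : 0 < E := by rw [hE_def]; positivity
  have hterm (n : ℕ) : x (n + 1) =
      r / α₂ * (Gamma (a + E) / Gamma a) * (Gamma (n + a) / Gamma (n + a + 1 + E)) := by
    have h₁ : 1 + (β₁ + β₂ + 1) / α₂ = a + E := by rw [ha_def, hE_def]; field_simp; ring
    have h₂ : ((n + 1 : ℕ) : ℝ) + β₂ / α₂ = n + a := by rw [ha_def]; push_cast; ring
    have h₃ : ((n + 1 : ℕ) : ℝ) + (α₂ + (β₁ + β₂) + 1) / α₂ = n + a + 1 + E := by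
      rw [ha_def, hE_def]; push_cast; field_simp; ring
    rw [hx (n + 1) n.succ_pos, h₁, h₂, h₃, ← ha_def]
  have hvalue : r / α₂ * (Gamma (a + E) / Gamma a) * (Gamma a / Gamma (a + E) / E)
      = r / (β₁ + 1) := by
    have := (Gamma_pos_of_pos ha).ne'
    have := (Gamma_pos_of_pos (add_pos ha hE)).ne'
    rw [hE_def]
    field_simp
  have hshift : HasSum (fun n => x (n + 1)) (r / (β₁ + 1)) := by
    simpa only [hterm, hvalue] using (hasSum_Gamma_div_Gamma_add_add_one ha hE).mul_left
      (r / α₂ * (Gamma (a + E) / Gamma a))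
  exact (hasSum_nat_add_iff' 1).mp (by simpa [hx0] using hshift)

theorem marginal_x0 (α₂ β₁ β₂ r : ℝ) (hα₂ : 0 < α₂) (hβ₁ : 0 < β₁) (hβ₂ : 0 < β₂)
    (hr : 0 < r) (x : ℕ → ℝ) (hx0 : x 0 = 0)
    (hx : ∀ l : ℕ, 1 ≤ l →
      x l = (r / α₂) *
        (Real.Gamma (1 + (β₁ + β₂ + 1) / α₂) / Real.Gamma (1 + β₂ / α₂)) *
        (Real.Gamma ((l : ℝ) + β₂ / α₂) /
          Real.Gamma ((l : ℝ) + (α₂ + (β₁ + β₂) + 1) / α₂))) :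
    HasSum x (r / (β₁ + 1)) :=
  marginal_x0_general α₂ β₁ β₂ r hα₂ hβ₁ hβ₂ x hx0 hx
end

section
/- With b^{(l)}_{w₁-1,i} defined as above and assuming w₁α₁ + β₁ + 1 > 2α₂, for each fixed i ≥ 1, ∑_{l=i}^∞ b^{(l)}_{w₁-1,i}·(l + β₂/α₂)(l + 1 + β₂/α₂) = ((w₁-1)α₁+β₁)/(w₁α₁+β₁+1−2α₂) · Γ(i+2+β₂/α₂)/Γ(i+β₂/α₂). -/
open Real Filter Topology

lemma aux_gamma_tendsto_zero (c d : ℝ) (hc : 0 < c) (hcd : c + 2 < d) :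
    Tendsto (fun n : ℕ => Real.Gamma ((n : ℝ) + 2 + c) / Real.Gamma ((n : ℝ) + d))
      atTop (𝓝 0) := by
  have hd : 0 < d := by linarith
  set U : ℕ → ℝ := fun n => Real.Gamma ((n : ℝ) + 2 + c) / Real.Gamma ((n : ℝ) + d) with hU
  have hUpos : ∀ n, 0 < U n := fun n => div_pos
    (Real.Gamma_pos_of_pos (by positivity)) (Real.Gamma_pos_of_pos (by positivity))
  have hstep : ∀ n : ℕ, U n - U (n + 1) = (d - c - 2) * (U n / ((n : ℝ) + d)) := by
    intro n
    have h1 : Real.Gamma (((n : ℕ) + 1 : ℕ) + 2 + c) = ((n : ℝ) + 2 + c) * Real.Gamma ((n : ℝ) + 2 + c) := by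
      push_cast
      rw [show (n : ℝ) + 1 + 2 + c = ((n : ℝ) + 2 + c) + 1 by ring, Real.Gamma_add_one (by positivity)]
    have h2 : Real.Gamma (((n : ℕ) + 1 : ℕ) + d) = ((n : ℝ) + d) * Real.Gamma ((n : ℝ) + d) := by
      push_cast
      rw [show (n : ℝ) + 1 + d = ((n : ℝ) + d) + 1 by ring, Real.Gamma_add_one (by positivity)]
    have hGne : Real.Gamma ((n : ℝ) + d) ≠ 0 := (Real.Gamma_pos_of_pos (by positivity)).ne'
    have hne : ((n : ℝ) + d) ≠ 0 := by positivity
    simp only [hU, h1, h2]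
    field_simp
    ring
  have hanti : Antitone U := antitone_nat_of_succ_le fun n => by
    have := hstep n
    have h2 : 0 ≤ (d - c - 2) * (U n / ((n : ℝ) + d)) := by
      apply mul_nonneg (by linarith)
      exact (div_pos (hUpos n) (by positivity)).le
    linarith
  have hbdd : BddBelow (Set.range U) := ⟨0, fun x ⟨n, hn⟩ => hn ▸ (hUpos n).le⟩
  have htend := tendsto_atTop_ciInf hanti hbdd
  set L := ⨅ n, U n with hL
  have hL0 : 0 ≤ L := le_ciInf fun n => (hUpos n).le
  have hLzero : L = 0 := by
    by_contra hne
    have hLpos : 0 < L := lt_of_le_of_ne hL0 (Ne.symm hne)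
    -- telescoping series summable
    have hsum : Summable (fun n : ℕ => U n - U (n + 1)) := by
      apply summable_of_sum_range_le (c := U 0)
      · intro n
        have := hstep n
        have : 0 ≤ (d - c - 2) * (U n / ((n : ℝ) + d)) :=
          mul_nonneg (by linarith) (div_pos (hUpos n) (by positivity)).le
        linarith [hstep n]
      · intro n
        rw [Finset.sum_range_sub' U n]
        linarith [hUpos n]
    have hsum2 : Summable (fun n : ℕ => (d - c - 2) * L * (1 / ((n : ℝ) + d))) := by
      have hdc : (0:ℝ) < d - c - 2 := by linarith
      apply Summable.of_nonneg_of_le _ _ hsum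
      · intro n
        exact mul_nonneg (mul_nonneg hdc.le hL0) (by positivity)
      · intro n
        rw [hstep n]
        rw [mul_assoc, mul_le_mul_iff_right₀ (by linarith : (0:ℝ) < d - c - 2)]
        rw [mul_one_div, div_le_div_iff_of_pos_right (by positivity)]
        exact ciInf_le hbdd n
    have hsum3 : Summable (fun n : ℕ => (1 / ((n : ℝ) + d))) := by
      have hdc : (0:ℝ) < (d - c - 2) * L := mul_pos (by linarith) hLpos
      have := hsum2.mul_left ((d - c - 2) * L)⁻¹
      convert this using 2 with n
      · rfl
      · rw [inv_mul_cancel_left₀ hdc.ne']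
    -- contradiction with harmonic series
    set m : ℕ := ⌈d⌉₊ + 1 with hm
    have hsum4 : Summable (fun n : ℕ => (1 / ((n : ℝ) + m))) := by
      apply Summable.of_nonneg_of_le _ _ hsum3
      · intro n; positivity
      · intro n
        apply one_div_le_one_div_of_le (by positivity)
        have : d ≤ (m : ℝ) := by
          push_cast [hm]
          linarith [Nat.le_ceil d]
        linarith
    have hsum5 : Summable (fun n : ℕ => (1 / ((n + m : ℕ) : ℝ))) := by
      convert hsum4 using 2 with n
      push_cast; ring
    exact Real.not_summable_one_div_natCast
      ((summable_nat_add_iff (f := fun n : ℕ => 1 / (n : ℝ)) m).mp hsum5)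
  rw [hLzero] at htend
  exact htend

lemma aux_gamma_step (c d : ℝ) (hc : 0 < c) (hd : 0 < d) (x : ℝ) (hx : 0 ≤ x) :
    Real.Gamma (x + 2 + c) / Real.Gamma (x + d)
      - Real.Gamma (x + 1 + 2 + c) / Real.Gamma (x + 1 + d)
      = (d - c - 2) * (Real.Gamma (x + 2 + c) / Real.Gamma (x + 1 + d)) := by
  have h1 : Real.Gamma (x + 1 + 2 + c) = (x + 2 + c) * Real.Gamma (x + 2 + c) := by
    rw [show x + 1 + 2 + c = (x + 2 + c) + 1 by ring, Real.Gamma_add_one (by positivity)]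
  have h2 : Real.Gamma (x + 1 + d) = (x + d) * Real.Gamma (x + d) := by
    rw [show x + 1 + d = (x + d) + 1 by ring, Real.Gamma_add_one (by positivity)]
  have hGne : Real.Gamma (x + d) ≠ 0 := (Real.Gamma_pos_of_pos (by positivity)).ne'
  have hne : (x + d) ≠ 0 := by positivity
  rw [h1, h2]
  field_simp
  ring

theorem sum_b_coeff_second_moment (α₁ α₂ β₁ β₂ : ℝ) (hα₁ : 0 < α₁) (hα₂ : 0 < α₂)
    (hβ₁ : 0 < β₁) (hβ₂ : 0 < β₂) (w₁ : ℕ) (hw₁ : 1 ≤ w₁)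
    (hcond : (w₁ : ℝ) * α₁ + β₁ + 1 > 2 * α₂)
    (i : ℕ) (hi : 1 ≤ i) (b : ℕ → ℝ)
    (hb : ∀ l : ℕ,
      b l = (((w₁ : ℝ) - 1) * α₁ + β₁) / α₂ *
        (Real.Gamma ((l : ℝ) + β₂ / α₂) /
          Real.Gamma ((l : ℝ) + 1 + ((w₁ : ℝ) * α₁ + (β₁ + β₂) + 1) / α₂)) *
        (Real.Gamma ((i : ℝ) + ((w₁ : ℝ) * α₁ + (β₁ + β₂) + 1) / α₂) /
          Real.Gamma ((i : ℝ) + β₂ / α₂))) :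
    HasSum
      (fun k : ℕ => b (i + k) * (((i + k : ℕ) : ℝ) + β₂ / α₂) *
        (((i + k : ℕ) : ℝ) + 1 + β₂ / α₂))
      ((((w₁ : ℝ) - 1) * α₁ + β₁) / ((w₁ : ℝ) * α₁ + β₁ + 1 - 2 * α₂) *
        (Real.Gamma ((i : ℝ) + 2 + β₂ / α₂) / Real.Gamma ((i : ℝ) + β₂ / α₂))) := by
  have hw : (1 : ℝ) ≤ (w₁ : ℝ) := by exact_mod_cast hw₁
  set c : ℝ := β₂ / α₂ with hc_def
  set d : ℝ := ((w₁ : ℝ) * α₁ + (β₁ + β₂) + 1) / α₂ with hd_def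
  have hc : 0 < c := by positivity
  have hd : 0 < d := by
    apply div_pos _ hα₂
    nlinarith
  have hcd : c + 2 < d := by
    rw [hc_def, hd_def, div_add' _ _ _ hα₂.ne', div_lt_div_iff_of_pos_right hα₂]
    linarith
  have hε : (0 : ℝ) < d - c - 2 := by linarith
  set A : ℝ := (((w₁ : ℝ) - 1) * α₁ + β₁) / α₂ with hA_def
  have hA : 0 < A := by
    apply div_pos _ hα₂
    nlinarith
  set R : ℝ := Real.Gamma ((i : ℝ) + d) / Real.Gamma ((i : ℝ) + c) with hR_def
  have hR : 0 < R :=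
    div_pos (Real.Gamma_pos_of_pos (by positivity)) (Real.Gamma_pos_of_pos (by positivity))
  set U : ℕ → ℝ := fun n => Real.Gamma ((n : ℝ) + 2 + c) / Real.Gamma ((n : ℝ) + d) with hU_def
  set C : ℝ := A * R / (d - c - 2) with hC_def
  -- the summand in closed form
  have hterm : ∀ k : ℕ,
      b (i + k) * (((i + k : ℕ) : ℝ) + c) * (((i + k : ℕ) : ℝ) + 1 + c)
        = (A * R) * (Real.Gamma (((i + k : ℕ) : ℝ) + 2 + c) /
            Real.Gamma (((i + k : ℕ) : ℝ) + 1 + d)) := by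
    intro k
    set l : ℝ := ((i + k : ℕ) : ℝ) with hl_def
    have hl : 0 ≤ l := by positivity
    have h1 : Real.Gamma (l + 1 + c) = (l + c) * Real.Gamma (l + c) := by
      rw [show l + 1 + c = (l + c) + 1 by ring, Real.Gamma_add_one (by positivity)]
    have h2 : Real.Gamma (l + 2 + c) = (l + 1 + c) * Real.Gamma (l + 1 + c) := by
      rw [show l + 2 + c = (l + 1 + c) + 1 by ring, Real.Gamma_add_one (by positivity)]
    rw [hb (i + k)]
    rw [h2, h1]
    ring
  have hnonneg : ∀ k : ℕ,
      0 ≤ b (i + k) * (((i + k : ℕ) : ℝ) + c) * (((i + k : ℕ) : ℝ) + 1 + c) := by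
    intro k
    rw [hterm k]
    have := Real.Gamma_pos_of_pos (show (0:ℝ) < ((i + k : ℕ) : ℝ) + 2 + c by positivity)
    have := Real.Gamma_pos_of_pos (show (0:ℝ) < ((i + k : ℕ) : ℝ) + 1 + d by positivity)
    positivity
  -- telescoping form
  have hkey : ∀ k : ℕ,
      b (i + k) * (((i + k : ℕ) : ℝ) + c) * (((i + k : ℕ) : ℝ) + 1 + c)
        = C * U (i + k) - C * U (i + k + 1) := by
    intro k
    have hstep := aux_gamma_step c d hc hd ((i + k : ℕ) : ℝ) (by positivity)
    rw [hterm k]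
    have hcast : (((i + k + 1 : ℕ)) : ℝ) = ((i + k : ℕ) : ℝ) + 1 := by push_cast; ring
    simp only [hU_def, hcast]
    rw [← mul_sub, hstep]
    rw [hC_def]
    field_simp
  -- partial sums
  have hpartial : ∀ n : ℕ,
      ∑ k ∈ Finset.range n,
        b (i + k) * (((i + k : ℕ) : ℝ) + c) * (((i + k : ℕ) : ℝ) + 1 + c)
        = C * U i - C * U (i + n) := by
    intro n
    have := Finset.sum_range_sub' (fun k => C * U (i + k)) n
    simp only [add_zero] at this
    rw [← this]
    apply Finset.sum_congr rfl
    intro k _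
    rw [hkey k, add_assoc]
  -- limit
  have htend0 : Tendsto (fun n : ℕ => U (i + n)) atTop (𝓝 0) := by
    have h := (aux_gamma_tendsto_zero c d hc hcd).comp (tendsto_add_atTop_nat i)
    convert h using 2 with n
    simp [hU_def, add_comm]
  have htends : Tendsto (fun n : ℕ =>
      ∑ k ∈ Finset.range n,
        b (i + k) * (((i + k : ℕ) : ℝ) + c) * (((i + k : ℕ) : ℝ) + 1 + c))
      atTop (𝓝 (C * U i)) := by
    simp only [hpartial]
    have : Tendsto (fun n : ℕ => C * U i - C * U (i + n)) atTop (𝓝 (C * U i - C * 0)) :=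
      tendsto_const_nhds.sub (htend0.const_mul C)
    simpa using this
  -- identify the sum value
  have hval : C * U i
      = (((w₁ : ℝ) - 1) * α₁ + β₁) / ((w₁ : ℝ) * α₁ + β₁ + 1 - 2 * α₂) *
        (Real.Gamma ((i : ℝ) + 2 + c) / Real.Gamma ((i : ℝ) + c)) := by
    have hG1 : Real.Gamma ((i : ℝ) + d) ≠ 0 := (Real.Gamma_pos_of_pos (by positivity)).ne'
    have hG2 : Real.Gamma ((i : ℝ) + c) ≠ 0 := (Real.Gamma_pos_of_pos (by positivity)).ne'
    have hG3 : Real.Gamma ((i : ℝ) + 2 + c) ≠ 0 := (Real.Gamma_pos_of_pos (by positivity)).ne'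
    have hden : (w₁ : ℝ) * α₁ + β₁ + 1 - 2 * α₂ ≠ 0 := by linarith
    have hεα : d - c - 2 = ((w₁ : ℝ) * α₁ + β₁ + 1 - 2 * α₂) / α₂ := by
      rw [hd_def, hc_def]
      field_simp
      ring
    rw [hC_def, hU_def, hA_def, hR_def, hεα]
    field_simp
  rw [hasSum_iff_tendsto_nat_of_nonneg hnonneg]
  rw [← hval]
  exact htends
end

section
/- Let x_{1,·} = (β₁/(α₁+β₁+1))·(r/(β₁+1) + (1-r)/β₁) and, for w₁ > 1, define x_{w₁,·} by the recursion x_{w₁,·} = ((w₁-1)α₁+β₁)/(w₁α₁+β₁+1) · x_{w₁-1,·}. Then for all w₁ > 1, x_{w₁,·} = Γ(w₁+β₁/α₁)/Γ(β₁/α₁) · Γ(1+(β₁+1)/α₁)/Γ(w₁+1+(β₁+1)/α₁) · (1-r+β₁)/(β₁(β₁+1)). -/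
/-! The closed form obeys the same first-order recursion as `x`: by `Γ(s + 1) = s Γ(s)`, the
ratio of its values at `n + 1` and `n` is `(n + β/α) / (n + 1 + (β + 1)/α)`, which is the
recursion coefficient `(n α + β) / ((n + 1) α + β + 1)`. It also agrees with `x` at `w = 1`. -/

open Real

theorem Nat.eq_of_eq_of_succ_eq {α : Type*} {x y : ℕ → α} (f : ℕ → α → α) {m : ℕ}
    (hm : x m = y m) (hx : ∀ n, m ≤ n → x (n + 1) = f n (x n))
    (hy : ∀ n, m ≤ n → y (n + 1) = f n (y n)) : ∀ n, m ≤ n → x n = y n := by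
  intro n hn
  induction n, hn using Nat.le_induction with
  | base => exact hm
  | succ n hn ih => rw [hx n hn, hy n hn, ih]

theorem Real.Gamma_add_one_div_Gamma_add_one {s a b : ℝ} (ha : s + a ≠ 0) (hb : s + b ≠ 0) :
    Gamma (s + 1 + a) / Gamma (s + 1 + b) = (s + a) / (s + b) * (Gamma (s + a) / Gamma (s + b)) := by
  rw [add_right_comm, Gamma_add_one ha, add_right_comm, Gamma_add_one hb, mul_div_mul_comm]

noncomputable def marginalClosedForm (α β r : ℝ) (w : ℕ) : ℝ :=
  Gamma ((w : ℝ) + β / α) / Gamma (β / α) *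
    (Gamma (1 + (β + 1) / α) / Gamma ((w : ℝ) + 1 + (β + 1) / α)) *
    ((1 - r + β) / (β * (β + 1)))

theorem marginalClosedForm_one {α β : ℝ} (hα : 0 < α) (hβ : 0 < β) (r : ℝ) :
    marginalClosedForm α β r 1 = β / (α + β + 1) * (r / (β + 1) + (1 - r) / β) := by
  have ha : β / α ≠ 0 := by positivity
  have hb : 1 + (β + 1) / α ≠ 0 := by positivity
  have hΓa : Gamma (β / α) ≠ 0 := (Gamma_pos_of_pos (by positivity)).ne'
  have hΓb : Gamma (1 + (β + 1) / α) ≠ 0 := (Gamma_pos_of_pos (by positivity)).ne'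
  rw [marginalClosedForm, Nat.cast_one, add_comm 1 (β / α), Gamma_add_one ha,
    add_right_comm (1 : ℝ) 1, Gamma_add_one hb]
  field_simp
  ring

theorem marginalClosedForm_succ {α β : ℝ} (hα : 0 < α) (hβ : 0 < β) (r : ℝ) (n : ℕ) :
    marginalClosedForm α β r (n + 1) =
      ((n : ℝ) * α + β) / (((n : ℝ) + 1) * α + β + 1) * marginalClosedForm α β r n := by
  have hratio : ((n : ℝ) + β / α) / (n + 1 + (β + 1) / α) =
      ((n : ℝ) * α + β) / (((n : ℝ) + 1) * α + β + 1) := by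
    field_simp
    ring
  have hΓ := Gamma_add_one_div_Gamma_add_one (s := n) (a := β / α) (b := 1 + (β + 1) / α)
    (by positivity) (by positivity)
  simp only [← add_assoc, hratio] at hΓ
  unfold marginalClosedForm
  push_cast
  linear_combination
    (Gamma (1 + (β + 1) / α) / Gamma (β / α) * ((1 - r + β) / (β * (β + 1)))) * hΓ

theorem marginal_recursion_form_general (α₁ β₁ r : ℝ) (hα₁ : 0 < α₁) (hβ₁ : 0 < β₁)
    (x : ℕ → ℝ)
    (hx1 : x 1 = (β₁ / (α₁ + β₁ + 1)) * (r / (β₁ + 1) + (1 - r) / β₁))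
    (hrec : ∀ w : ℕ, 1 < w →
      x w = (((w : ℝ) - 1) * α₁ + β₁) / ((w : ℝ) * α₁ + β₁ + 1) * x (w - 1)) :
    ∀ w : ℕ, 1 < w →
      x w = Real.Gamma ((w : ℝ) + β₁ / α₁) / Real.Gamma (β₁ / α₁) *
        (Real.Gamma (1 + (β₁ + 1) / α₁) / Real.Gamma ((w : ℝ) + 1 + (β₁ + 1) / α₁)) *
        ((1 - r + β₁) / (β₁ * (β₁ + 1))) := by
  intro w hw
  refine Nat.eq_of_eq_of_succ_eq (y := marginalClosedForm α₁ β₁ r)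
    (fun n xn => ((n : ℝ) * α₁ + β₁) / (((n : ℝ) + 1) * α₁ + β₁ + 1) * xn)
    (hx1.trans (marginalClosedForm_one hα₁ hβ₁ r).symm) (fun n hn => ?_)
    (fun n _ => marginalClosedForm_succ hα₁ hβ₁ r n) w hw.le
  simpa using hrec (n + 1) (by omega)

theorem marginal_recursion_form (α₁ β₁ r : ℝ) (hα₁ : 0 < α₁) (hβ₁ : 0 < β₁)
    (hr0 : 0 < r) (hr1 : r < 1) (x : ℕ → ℝ)
    (hx1 : x 1 = (β₁ / (α₁ + β₁ + 1)) * (r / (β₁ + 1) + (1 - r) / β₁))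
    (hrec : ∀ w : ℕ, 1 < w →
      x w = (((w : ℝ) - 1) * α₁ + β₁) / ((w : ℝ) * α₁ + β₁ + 1) * x (w - 1)) :
    ∀ w : ℕ, 1 < w →
      x w = Real.Gamma ((w : ℝ) + β₁ / α₁) / Real.Gamma (β₁ / α₁) *
        (Real.Gamma (1 + (β₁ + 1) / α₁) / Real.Gamma ((w : ℝ) + 1 + (β₁ + 1) / α₁)) *
        ((1 - r + β₁) / (β₁ * (β₁ + 1))) :=
  marginal_recursion_form_general α₁ β₁ r hα₁ hβ₁ x hx1 hrec
end
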